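/- Let s ≠ 0 be a real number and let T be a tree with maximum degree Δ(T). If Δ(T) ≥ 3, then ρ(M_T(s)) > 1 + √3·|s| + s²; if moreover Δ(T) ≥ 4, then ρ(M_T(s)) > (1 + |s|)². -/

import Mathlib

open Filter Topology

/-- The deformed Laplacian matrix `M_G(s) = I - s·A + s²·(D - I)` of a finite simple graph. -/
noncomputable def defLap {V : Type*} [Fintype V] [DecidableEq V] (G : SimpleGraph V) (s : ℝ) :
    Matrix V V ℝ :=
  letI := Classical.decRel G.Adj
  (1 : Matrix V V ℝ) - s • (G.adjMatrix ℝ) +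
    s ^ 2 • (Matrix.diagonal (fun v => (G.degree v : ℝ)) - 1)

/-- The largest (real) eigenvalue of a matrix. -/
noncomputable def lamMax {V : Type*} [Fintype V] (M : Matrix V V ℝ) : ℝ :=
  sSup {μ : ℝ | ∃ v : V → ℝ, v ≠ 0 ∧ M.mulVec v = μ • v}

/-- The spectral radius of a real matrix: the supremum of the absolute values of its
(real) eigenvalues. -/
noncomputable def specRad {V : Type*} [Fintype V] (M : Matrix V V ℝ) : ℝ :=
  sSup {x : ℝ | ∃ μ : ℝ, (∃ v : V → ℝ, v ≠ 0 ∧ M.mulVec v = μ • v) ∧ x = |μ|}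

/-- The maximum degree of a finite simple graph. -/
noncomputable def maxDeg {V : Type*} [Fintype V] (G : SimpleGraph V) : ℕ :=
  letI := Classical.decRel G.Adj
  G.maxDegree

/-!
Evaluate the quadratic form of `M_T(s)` at the vector `x` that is `c` at a vertex `v` of maximum
degree `d`, `1` at the neighbours of `v` and `0` elsewhere, with `c = ±t` of sign opposite to `s`.
A tree has no triangles, so `xᵀAx = 2cd`, while `xᵀDx ≥ dt² + d`; hence
`ρ(M_T(s)) (t² + d) ≥ t² + d + 2|s|td + s²(d - 1)t²`. The choices `t = √3 + |s|` for `d ≥ 3` and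
`t = 2` for `d ≥ 4` make this exceed the claimed bounds times `t² + d`.
-/

open Matrix SimpleGraph
open scoped MatrixOrder

section Spectral

variable {n : Type*} [Fintype n]

attribute [local instance] Matrix.linftyOpNormedAddCommGroup

theorem bddAbove_setOf_hasEigenvector (M : Matrix n n ℝ) :
    BddAbove {μ : ℝ | ∃ v : n → ℝ, v ≠ 0 ∧ M *ᵥ v = μ • v} := by
  refine ⟨‖M‖, ?_⟩
  rintro μ ⟨v, hv, hMv⟩
  have h : ‖μ‖ * ‖v‖ ≤ ‖M‖ * ‖v‖ := by
    rw [← norm_smul, ← hMv]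
    exact linfty_opNorm_mulVec M v
  exact (le_abs_self μ).trans (le_of_mul_le_mul_right h (norm_pos_iff.mpr hv))

theorem Matrix.IsHermitian.dotProduct_mulVec_le_lamMax [DecidableEq n] {M : Matrix n n ℝ}
    (hM : M.IsHermitian) (x : n → ℝ) : x ⬝ᵥ M *ᵥ x ≤ lamMax M * (x ⬝ᵥ x) := by
  have hspec : ∀ μ ∈ spectrum ℝ M, μ ≤ lamMax M := by
    rw [hM.spectrum_real_eq_range_eigenvalues]
    rintro _ ⟨i, rfl⟩
    refine le_csSup (bddAbove_setOf_hasEigenvector M) ⟨_, ?_, hM.mulVec_eigenvectorBasis i⟩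
    exact fun h => hM.eigenvectorBasis.orthonormal.ne_zero i (by ext j; exact congrFun h j)
  have := (le_algebraMap_of_spectrum_le hspec hM.isSelfAdjoint).dotProduct_mulVec_nonneg x
  simpa [sub_mulVec, Algebra.algebraMap_eq_smul_one, smul_mulVec, dotProduct_sub] using this

end Spectral

section StarVector

variable {V : Type*} [DecidableEq V] (G : SimpleGraph V) [DecidableRel G.Adj]

def starVec (v : V) (c : ℝ) : V → ℝ :=
  Pi.single v c + fun u => if G.Adj v u then 1 else 0

variable {G}

theorem starVec_self (v : V) (c : ℝ) : starVec G v c v = c := by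
  simp [starVec]

theorem starVec_of_adj {v u : V} (h : G.Adj v u) (c : ℝ) : starVec G v c u = 1 := by
  simp [starVec, h, h.ne']

theorem starVec_of_not_adj {v u : V} (hu : u ≠ v) (h : ¬G.Adj v u) (c : ℝ) :
    starVec G v c u = 0 := by
  simp [starVec, h, hu]

variable [Fintype V]

theorem starVec_dotProduct (v : V) (c : ℝ) (y : V → ℝ) :
    starVec G v c ⬝ᵥ y = c * y v + ∑ u ∈ G.neighborFinset v, y u := by
  rw [starVec, add_dotProduct, single_dotProduct, neighborFinset_eq_filter, Finset.sum_filter]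
  simp [dotProduct]

theorem starVec_dotProduct_self (v : V) (c : ℝ) :
    starVec G v c ⬝ᵥ starVec G v c = c ^ 2 + G.degree v := by
  rw [starVec_dotProduct, starVec_self, Finset.sum_congr rfl fun u hu =>
    starVec_of_adj ((G.mem_neighborFinset v u).mp hu) c]
  simp [sq]

theorem adjMatrix_mulVec_starVec_self (v : V) (c : ℝ) :
    (G.adjMatrix ℝ *ᵥ starVec G v c) v = G.degree v := by
  rw [adjMatrix_mulVec_apply, Finset.sum_congr rfl fun u hu =>
    starVec_of_adj ((G.mem_neighborFinset v u).mp hu) c]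
  simp

theorem adjMatrix_mulVec_starVec_of_adj (hG : G.CliqueFree 3) {v u : V} (h : G.Adj v u) (c : ℝ) :
    (G.adjMatrix ℝ *ᵥ starVec G v c) u = c := by
  rw [adjMatrix_mulVec_apply, Finset.sum_eq_single_of_mem v ((G.mem_neighborFinset u v).mpr h.symm),
    starVec_self]
  intro w hw hwv
  refine starVec_of_not_adj hwv (fun hvw => hG {v, u, w} ?_) c
  exact is3Clique_triple_iff.mpr ⟨h, hvw, (G.mem_neighborFinset u w).mp hw⟩

theorem starVec_dotProduct_adjMatrix_mulVec (hG : G.CliqueFree 3) (v : V) (c : ℝ) :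
    starVec G v c ⬝ᵥ G.adjMatrix ℝ *ᵥ starVec G v c = 2 * c * G.degree v := by
  rw [starVec_dotProduct, adjMatrix_mulVec_starVec_self, Finset.sum_congr rfl fun u hu =>
    adjMatrix_mulVec_starVec_of_adj hG ((G.mem_neighborFinset v u).mp hu) c, Finset.sum_const,
    card_neighborFinset_eq_degree, nsmul_eq_mul]
  ring

theorem degree_mul_add_le_starVec_dotProduct_degree_mulVec (v : V) (c : ℝ) :
    G.degree v * c ^ 2 + G.degree v ≤
      starVec G v c ⬝ᵥ diagonal (fun u => (G.degree u : ℝ)) *ᵥ starVec G v c := by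
  have h : (G.degree v : ℝ) ≤ ∑ u ∈ G.neighborFinset v, G.degree u * starVec G v c u := by
    calc (G.degree v : ℝ) = ∑ u ∈ G.neighborFinset v, (1 : ℝ) := by simp
      _ ≤ _ := Finset.sum_le_sum fun u hu => by
        have hvu := (G.mem_neighborFinset v u).mp hu
        rw [starVec_of_adj hvu, mul_one, Nat.one_le_cast]
        exact (G.degree_pos_iff_exists_adj u).mpr ⟨v, hvu.symm⟩
  simp only [starVec_dotProduct, mulVec_diagonal, starVec_self]
  linarith

variable (G)

theorem defLap_eq (s : ℝ) :
    defLap G s = 1 - s • G.adjMatrix ℝ + s ^ 2 • (diagonal (fun v => (G.degree v : ℝ)) - 1) := by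
  unfold defLap
  congr!

theorem defLap_isHermitian (s : ℝ) : (defLap G s).IsHermitian := by
  have hA : (G.adjMatrix ℝ)ᵀ = G.adjMatrix ℝ := G.isSymm_adjMatrix
  simp [defLap_eq, IsHermitian, conjTranspose_eq_transpose_of_trivial, hA]

theorem dotProduct_defLap_mulVec (s : ℝ) (x : V → ℝ) :
    x ⬝ᵥ defLap G s *ᵥ x = x ⬝ᵥ x - s * (x ⬝ᵥ G.adjMatrix ℝ *ᵥ x)
      + s ^ 2 * (x ⬝ᵥ diagonal (fun v => (G.degree v : ℝ)) *ᵥ x - x ⬝ᵥ x) := by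
  simp only [defLap_eq, add_mulVec, sub_mulVec, smul_mulVec, one_mulVec, dotProduct_add,
    dotProduct_sub, dotProduct_smul, smul_eq_mul]

end StarVector

section Bounds

variable {V : Type*} [Fintype V] [DecidableEq V] {G : SimpleGraph V} [DecidableRel G.Adj]

theorem lamMax_defLap_mul_ge (hG : G.CliqueFree 3) (v : V) (s t : ℝ) :
    t ^ 2 + G.degree v + 2 * |s| * t * G.degree v + s ^ 2 * (G.degree v - 1) * t ^ 2 ≤
      lamMax (defLap G s) * (t ^ 2 + G.degree v) := by
  obtain ⟨c, hc, hsc⟩ : ∃ c : ℝ, c ^ 2 = t ^ 2 ∧ s * c = -(|s| * t) := by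
    rcases le_or_gt 0 s with hs | hs
    · exact ⟨-t, by ring, by rw [abs_of_nonneg hs]; ring⟩
    · exact ⟨t, rfl, by rw [abs_of_neg hs]; ring⟩
  have hray := (defLap_isHermitian G s).dotProduct_mulVec_le_lamMax (starVec G v c)
  rw [dotProduct_defLap_mulVec, starVec_dotProduct_self, starVec_dotProduct_adjMatrix_mulVec hG,
    hc] at hray
  have hdeg := mul_le_mul_of_nonneg_left
    (degree_mul_add_le_starVec_dotProduct_degree_mulVec (G := G) v c) (sq_nonneg s)
  rw [hc] at hdeg
  linear_combination hray + hdeg + (2 * G.degree v) * hsc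

theorem lt_lamMax_defLap (hG : G.CliqueFree 3) (v : V) {s t b : ℝ}
    (h : b * (t ^ 2 + G.degree v) <
      t ^ 2 + G.degree v + 2 * |s| * t * G.degree v + s ^ 2 * (G.degree v - 1) * t ^ 2) :
    b < lamMax (defLap G s) :=
  lt_of_mul_lt_mul_right (h.trans_le (lamMax_defLap_mul_ge hG v s t)) (by positivity)

theorem one_add_sqrt_three_mul_add_sq_lt_lamMax_defLap (hG : G.CliqueFree 3) {v : V}
    (hv : 3 ≤ G.degree v) {s : ℝ} (hs : s ≠ 0) :
    1 + √3 * |s| + s ^ 2 < lamMax (defLap G s) := by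
  refine lt_lamMax_defLap hG v (t := √3 + |s|) ?_
  set a := |s|
  set d : ℝ := (G.degree v : ℝ)
  have ha : 0 < a := abs_pos.mpr hs
  have hd : 3 ≤ d := Nat.ofNat_le_cast.mpr hv
  have hr : √3 ^ 2 = 3 := Real.sq_sqrt (by norm_num)
  have hr0 : 0 < √3 := by positivity
  have hgap : (√3 + a) ^ 2 + d + 2 * a * (√3 + a) * d + s ^ 2 * (d - 1) * (√3 + a) ^ 2
      - (1 + √3 * a + s ^ 2) * ((√3 + a) ^ 2 + d)
      = √3 * a * (d - 3) + 4 * a ^ 2 * (d - 3) + √3 * a ^ 3 * (2 * d - 5) + a ^ 4 * (d - 2) := by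
    rw [← sq_abs s]
    linear_combination (a ^ 2 * d - 4 * a ^ 2 - √3 * a) * hr
  nlinarith [mul_nonneg (mul_pos hr0 ha).le (sub_nonneg.mpr hd), mul_pos hr0 (pow_pos ha 3),
    pow_pos ha 4]

theorem one_add_abs_sq_lt_lamMax_defLap (hG : G.CliqueFree 3) {v : V} (hv : 4 ≤ G.degree v)
    {s : ℝ} (hs : s ≠ 0) : (1 + |s|) ^ 2 < lamMax (defLap G s) := by
  refine lt_lamMax_defLap hG v (t := 2) ?_
  have ha : 0 < |s| := abs_pos.mpr hs
  have hd : (4 : ℝ) ≤ G.degree v := Nat.ofNat_le_cast.mpr hv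
  rw [← sq_abs s]
  nlinarith [mul_pos ha ha]

end Bounds

/-- for `s ≠ 0` and a tree `T`: if `Δ(T) ≥ 3` then
`ρ(M_T(s)) > 1 + √3·|s| + s²`; if moreover `Δ(T) ≥ 4` then `ρ(M_T(s)) > (1 + |s|)²`. -/
theorem stmt10 {V : Type*} [Fintype V] [DecidableEq V] (T : SimpleGraph V)
    (hT : T.IsTree) (s : ℝ) (hs : s ≠ 0) :
    (3 ≤ maxDeg T → 1 + Real.sqrt 3 * |s| + s ^ 2 < lamMax (defLap T s)) ∧
    (4 ≤ maxDeg T → (1 + |s|) ^ 2 < lamMax (defLap T s)) := by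
  classical
  have : Nonempty V := hT.connected.nonempty
  obtain ⟨v, hv⟩ := T.exists_maximal_degree_vertex
  have hΔ : maxDeg T = T.degree v := by rw [maxDeg, hv]
  have hT3 : T.CliqueFree 3 := hT.isAcyclic.cliqueFree le_rfl
  rw [hΔ]
  exact ⟨fun h3 => one_add_sqrt_three_mul_add_sq_lt_lamMax_defLap hT3 h3 hs,
    fun h4 => one_add_abs_sq_lt_lamMax_defLap hT3 h4 hs⟩
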